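/- Let G be a finite simple graph of order n with r = χ(G), where n ≡ r − 1 (mod r), and suppose es_χ(G) = ⌊n/r⌋·⌊n/r + 1⌋. Then for every proper coloring of G with exactly r color classes C_1, …, C_r ordered so that |C_1| ≤ ⋯ ≤ |C_r|, every vertex v ∈ C_i and every index j ∈ {1, …, r} \ {i} satisfy e(v, C_j) ≥ ⌊n/r⌋, where e(v, C_j) is the number of edges from v to vertices of C_j. -/

import Mathlib

open Function

/-- The chromatic-stability index: the minimum number of edges whose removal
decreases the chromatic number (0 if no such edge set exists, e.g. for edgeless graphs). -/
noncomputable def esChi {V : Type*} [Fintype V] (G : SimpleGraph V) : ℕ :=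
  sInf {k | ∃ F : Finset (Sym2 V),
    ↑F ⊆ G.edgeSet ∧ F.card = k ∧
    (G.deleteEdges ↑F).chromaticNumber < G.chromaticNumber}

open scoped Classical in
/-- The color class of color `i` under the coloring `c`, as a `Finset`. -/
noncomputable def classOf {V : Type*} [Fintype V] {G : SimpleGraph V} {α : Type*}
    (c : G.Coloring α) (i : α) : Finset V :=
  Finset.univ.filter fun v => c v = i

open scoped Classical in
/-- The number of edges of `G` with one endpoint in `A` and the other in `B`
(for disjoint `A`, `B`). -/
noncomputable def eCC {V : Type*} [Fintype V] (G : SimpleGraph V) (A B : Finset V) : ℕ :=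
  ((A ×ˢ B).filter fun p => G.Adj p.1 p.2).card

/-- `c*`: the minimum size of a color class over all proper colorings of `G`
using exactly `χ(G)` colors. -/
noncomputable def cStar {V : Type*} [Fintype V] (G : SimpleGraph V) : ℕ :=
  sInf {k | ∃ (c : G.Coloring (Fin G.chromaticNumber.toNat))
      (i : Fin G.chromaticNumber.toNat),
    Surjective c ∧ k = (classOf c i).card}

/-- The chromatic bondage number: the minimum number of edges between two distinct
color classes, over all proper colorings of `G` using exactly `χ(G)` colors. -/
noncomputable def rhoChi {V : Type*} [Fintype V] (G : SimpleGraph V) : ℕ :=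
  sInf {k | ∃ (c : G.Coloring (Fin G.chromaticNumber.toNat))
      (i j : Fin G.chromaticNumber.toNat),
    Surjective c ∧ i ≠ j ∧ k = eCC G (classOf c i) (classOf c j)}

/-!
Merging two colour classes `C_a` and `C_b` of an optimal colouring yields a colouring with one
colour fewer once the edges between them are deleted, so `es_χ(G) ≤ e(C_a, C_b) ≤ |C_a| |C_b|`.
With `es_χ(G) = q (q + 1)`, `n = r q + (r - 1)` and `C_0` a smallest class, this forces
`|C_0| = q` and `|C_k| = q + 1` for `k ≠ 0`. Now move `v ∈ C_i` to `C_j` and the rest of `C_i`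
to a class `C_m` (`m = 0`, or `m = j` when `i = 0`); this frees colour `i` at the cost of at most
`e(v, C_j) + q²` edges, so `q (q + 1) ≤ e(v, C_j) + q²`.
-/

section

open SimpleGraph

variable {V : Type*} [Fintype V] {G : SimpleGraph V}

lemma esChi_le_card_of_not_surjective {α : Type*} [Fintype α]
    (hχ : G.chromaticNumber = Fintype.card α) (f : V → α) (hf : ¬Surjective f)
    (P : Finset (V × V)) (hP : ∀ p ∈ P, G.Adj p.1 p.2)
    (hcover : ∀ u w, G.Adj u w → f u = f w → (u, w) ∈ P ∨ (w, u) ∈ P) :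
    esChi G ≤ P.card := by
  classical
  obtain ⟨i₀, hi₀⟩ : ∃ i₀, ∀ u, f u ≠ i₀ := by simpa [Surjective] using hf
  let F := P.image fun p => s(p.1, p.2)
  have hF : (F : Set (Sym2 V)) ⊆ G.edgeSet := by
    rintro _ he
    obtain ⟨p, hp, rfl⟩ := Finset.mem_image.1 he
    exact hP p hp
  let g : (G.deleteEdges F).Coloring {x // x ≠ i₀} :=
    Coloring.mk (fun u => ⟨f u, hi₀ u⟩) fun {u w} huw heq => by
      rw [deleteEdges_adj] at huw
      refine huw.2 ?_
      rcases hcover u w huw.1 (congrArg Subtype.val heq) with h | h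
      · exact Finset.mem_image_of_mem _ h
      · rw [Sym2.eq_swap]; exact Finset.mem_image_of_mem _ h
  have hlt : (G.deleteEdges F).chromaticNumber < G.chromaticNumber := by
    calc (G.deleteEdges F).chromaticNumber ≤ Fintype.card {x // x ≠ i₀} :=
          g.colorable.chromaticNumber_le
      _ < G.chromaticNumber := by
          rw [hχ, Fintype.card_subtype_compl, Fintype.card_subtype_eq]
          exact_mod_cast Nat.sub_lt (Fintype.card_pos_iff.2 ⟨i₀⟩) one_pos
  calc esChi G ≤ F.card := Nat.sInf_le ⟨F, hF, rfl, hlt⟩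
    _ ≤ P.card := Finset.card_image_le

lemma eCC_le_card_mul_card (A B : Finset V) : eCC G A B ≤ A.card * B.card := by
  classical
  exact (Finset.card_filter_le _ _).trans (Finset.card_product A B).le

section ColorClasses

variable {α : Type*} (c : G.Coloring α)

lemma mem_classOf {i : α} {v : V} : v ∈ classOf c i ↔ c v = i := by
  simp [classOf]

lemma sum_card_classOf [Fintype α] : ∑ k, (classOf c k).card = Fintype.card V := by
  classical
  rw [← Finset.card_univ, Finset.card_eq_sum_card_fiberwise fun v _ => Finset.mem_univ (c v)]
  simp [classOf]

variable [Fintype α] [DecidableEq V] (hχ : G.chromaticNumber = Fintype.card α)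
include hχ

/-- Recolouring `S` with `j` and `C_i \ S` with `m` frees colour `i`. -/
lemma esChi_le_eCC_add_eCC {i j m : α} (hj : j ≠ i) (hm : m ≠ i) {S : Finset V}
    (hS : S ⊆ classOf c i) :
    esChi G ≤ eCC G S (classOf c j) + eCC G (classOf c i \ S) (classOf c m) := by
  classical
  let f : V → α := fun u => if u ∈ S then j else if c u = i then m else c u
  let P := (S ×ˢ classOf c j ∪ (classOf c i \ S) ×ˢ classOf c m).filter
    fun p => G.Adj p.1 p.2
  have hf : ¬Surjective f := fun h => by
    obtain ⟨u, hu⟩ := h i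
    simp only [f] at hu
    split_ifs at hu <;> contradiction
  have hnotS : ∀ u, c u ≠ i → u ∉ S := fun u hu h => hu ((mem_classOf c).1 (hS h))
  have hfrom_i : ∀ u w, G.Adj u w → f u = f w → c u = i → (u, w) ∈ P := by
    intro u w hadj hfuw hu
    have hw : c w ≠ i := hu ▸ (c.valid hadj).symm
    simp only [f, hnotS w hw, hw, if_false, hu, if_true] at hfuw
    by_cases huS : u ∈ S
    · simp only [huS, if_true] at hfuw
      simp [P, mem_classOf, hadj, huS, hfuw]
    · simp only [huS, if_false] at hfuw
      simp [P, mem_classOf, hadj, huS, hu, hfuw]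
  refine (esChi_le_card_of_not_surjective hχ f hf P (fun p hp => (Finset.mem_filter.1 hp).2)
    fun u w hadj hfuw => ?_).trans ?_
  · by_cases hu : c u = i
    · exact .inl (hfrom_i u w hadj hfuw hu)
    by_cases hw : c w = i
    · exact .inr (hfrom_i w u hadj.symm hfuw.symm hw)
    simp only [f, hnotS u hu, hnotS w hw, hu, hw, if_false] at hfuw
    exact absurd hfuw (c.valid hadj)
  · simp only [P, Finset.filter_union]
    exact Finset.card_union_le _ _

lemma esChi_le_eCC_classOf {i j : α} (hij : i ≠ j) :
    esChi G ≤ eCC G (classOf c i) (classOf c j) := by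
  simpa [eCC] using esChi_le_eCC_add_eCC c hχ hij.symm hij.symm (subset_refl (classOf c i))

lemma le_eCC_singleton_of_le_esChi {i j m : α} (hj : j ≠ i) (hm : m ≠ i) {v : V}
    (hv : v ∈ classOf c i) {q : ℕ} (hes : q * (q + 1) ≤ esChi G)
    (hsmall : ((classOf c i).card - 1) * (classOf c m).card ≤ q * q) :
    q ≤ eCC G {v} (classOf c j) := by
  have hbound := esChi_le_eCC_add_eCC c hχ hj hm (Finset.singleton_subset_iff.2 hv)
  have hcross := eCC_le_card_mul_card (G := G) ((classOf c i).erase v) (classOf c m)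
  rw [Finset.sdiff_singleton_eq_erase] at hbound
  rw [Finset.card_erase_of_mem hv] at hcross
  nlinarith

end ColorClasses

end

section ClassSizes

variable {ι : Type*} [Fintype ι] [DecidableEq ι] {a : ι → ℕ} {q : ℕ} {i₀ k : ι}

lemma add_le_two_mul_add_one_of_sum_eq
    (hsum : ∑ l, a l = Fintype.card ι * q + (Fintype.card ι - 1))
    (hlb : ∀ l ≠ i₀, q + 1 ≤ a l) (hk : k ≠ i₀) :
    a i₀ + a k ≤ 2 * q + 1 := by
  have hcard : 2 ≤ Fintype.card ι := by
    simpa [Finset.card_pair hk.symm] using Finset.card_le_univ ({i₀, k} : Finset ι)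
  have hsplit := Finset.sum_add_sum_compl {i₀, k} a
  have hrest := Finset.card_nsmul_le_sum ({i₀, k}ᶜ : Finset ι) a (q + 1) fun l hl =>
    hlb l (by simp only [Finset.mem_compl, Finset.mem_insert, not_or] at hl; exact hl.1)
  rw [Finset.sum_pair hk.symm, hsum] at hsplit
  rw [Finset.card_compl, Finset.card_pair hk.symm, smul_eq_mul] at hrest
  zify [hcard, one_le_two.trans hcard] at hsplit hrest ⊢
  nlinarith

lemma eq_and_eq_succ_of_sum_eq_of_le_mul (hq : 0 < q)
    (hsum : ∑ l, a l = Fintype.card ι * q + (Fintype.card ι - 1))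
    (hmin : ∀ l, a i₀ ≤ a l) (hprod : ∀ l ≠ i₀, q * (q + 1) ≤ a i₀ * a l) (hk : k ≠ i₀) :
    a i₀ = q ∧ a k = q + 1 := by
  have hmin_le : a i₀ ≤ q := by
    have hcard : 0 < Fintype.card ι := Fintype.card_pos_iff.2 ⟨i₀⟩
    have hlow := Finset.card_nsmul_le_sum Finset.univ a (a i₀) fun l _ => hmin l
    rw [Finset.card_univ, smul_eq_mul, hsum] at hlow
    have : Fintype.card ι * a i₀ < Fintype.card ι * (q + 1) := by
      rw [mul_add_one]; omega
    exact Nat.lt_succ_iff.1 (Nat.lt_of_mul_lt_mul_left this)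
  have hlb : ∀ l ≠ i₀, q + 1 ≤ a l := fun l hl =>
    Nat.le_of_mul_le_mul_left ((hprod l hl).trans (Nat.mul_le_mul_right _ hmin_le)) hq
  have hpair := add_le_two_mul_add_one_of_sum_eq hsum hlb hk
  have hmin_eq : a i₀ = q := by
    have := hprod k hk
    by_contra hne
    have hlt : a i₀ + 1 ≤ q := by omega
    -- `a i₀ * a k ≤ a i₀ * (2q + 1 - a i₀) < q (q + 1)` once `a i₀ < q`
    nlinarith [Nat.mul_le_mul_left (a i₀) hpair]
  exact ⟨hmin_eq, by have := hlb k hk; omega⟩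

end ClassSizes

/-- If `n ≡ r − 1 (mod r)` where `r = χ(G)` and
`es_χ(G) = ⌊n/r⌋·⌊n/r + 1⌋`, then in every proper coloring of `G` with exactly `r`
color classes ordered by nondecreasing size, every `v ∈ C_i` sends at least
`⌊n/r⌋` edges to each other class `C_j`. -/
theorem extremal_coloring_degree_bound {V : Type*} [Fintype V] (G : SimpleGraph V)
    (r : ℕ) (hchi : G.chromaticNumber = r)
    (hmod : Fintype.card V % r = r - 1)
    (hes : esChi G = (Fintype.card V / r) * (Fintype.card V / r + 1)) :
    ∀ c : G.Coloring (Fin r), Surjective c →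
      (∀ i j : Fin r, i ≤ j → (classOf c i).card ≤ (classOf c j).card) →
      ∀ (i : Fin r) (v : V), v ∈ classOf c i → ∀ j : Fin r, j ≠ i →
        Fintype.card V / r ≤ eCC G {v} (classOf c j) := by
  classical
  intro c _ hsorted i v hv j hji
  set q := Fintype.card V / r
  rcases Nat.eq_zero_or_pos q with hq | hq
  · exact hq ▸ Nat.zero_le _
  have : NeZero r := ⟨fun h => (h ▸ i).elim0⟩
  have hχ : G.chromaticNumber = Fintype.card (Fin r) := by simpa using hchi
  have hsizes {k : Fin r} (hk : k ≠ 0) : (classOf c 0).card = q ∧ (classOf c k).card = q + 1 :=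
    eq_and_eq_succ_of_sum_eq_of_le_mul (a := fun k => (classOf c k).card) hq
      (by rw [sum_card_classOf, Fintype.card_fin, ← hmod, Nat.div_add_mod])
      (fun l => hsorted 0 l (Fin.zero_le l))
      (fun l hl => hes ▸ (esChi_le_eCC_classOf c hχ (Ne.symm hl)).trans
        (eCC_le_card_mul_card _ _)) hk
  refine le_eCC_singleton_of_le_esChi c hχ hji (m := if i = 0 then j else 0) ?_ hv hes.ge ?_
  · split_ifs with hi
    exacts [hji, Ne.symm hi]
  · by_cases hi : i = 0
    · subst hi
      obtain ⟨h0, hj⟩ := hsizes hji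
      simp only [if_true, h0, hj]
      rw [Nat.sub_one_mul, mul_add_one]
      omega
    · obtain ⟨h0, hi'⟩ := hsizes hi
      simp [hi, h0, hi']
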